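/- Let $N \geq 1$, let $m_1,\dots,m_N, \bar m \in \mathbb{R}$ with $\bar m = \frac{1}{N}\sum_i m_i$, and let $\omega_i > 0$, $\kappa_\varphi > 0$. Then (indices cyclic) $\sum_{i=1}^N (m_i - \bar m)\big(\kappa_\varphi(m_{i+1}-m_i)\omega_{i+1} - \kappa_\varphi(m_i - m_{i-1})\omega_i\big) = -\kappa_\varphi \sum_{i=1}^N (m_i - m_{i-1})^2 \omega_i \leq 0$, with equality if and only if $m_1 = m_2 = \cdots = m_N$. -/
import Mathlib


open Finset

theorem stmt_11 (N : ℕ) (hN : 1 ≤ N) [NeZero N]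
    (m ω : ZMod N → ℝ) (hω : ∀ i, 0 < ω i) (κ : ℝ) (hκ : 0 < κ)
    (mbar : ℝ) (hmbar : mbar = (∑ i : ZMod N, m i) / N) :
    (∑ i : ZMod N, (m i - mbar) *
        (κ * (m (i + 1) - m i) * ω (i + 1) - κ * (m i - m (i - 1)) * ω i))
      = -κ * ∑ i : ZMod N, (m i - m (i - 1)) ^ 2 * ω i ∧
    -κ * (∑ i : ZMod N, (m i - m (i - 1)) ^ 2 * ω i) ≤ 0 ∧
    (-κ * (∑ i : ZMod N, (m i - m (i - 1)) ^ 2 * ω i) = 0 ↔ ∀ i j : ZMod N, m i = m j) := by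
  have hterm : ∀ i : ZMod N, 0 ≤ (m i - m (i - 1)) ^ 2 * ω i := fun i =>
    mul_nonneg (sq_nonneg _) (hω i).le
  have hS : 0 ≤ ∑ i : ZMod N, (m i - m (i - 1)) ^ 2 * ω i :=
    Finset.sum_nonneg fun i _ => hterm i
  have key : (∑ i : ZMod N, (m i - mbar) *
        (κ * (m (i + 1) - m i) * ω (i + 1) - κ * (m i - m (i - 1)) * ω i))
      = -κ * ∑ i : ZMod N, (m i - m (i - 1)) ^ 2 * ω i := by
    have h1 : ∑ i : ZMod N, (m i - mbar) * (κ * (m (i + 1) - m i) * ω (i + 1))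
        = ∑ i : ZMod N, (m (i - 1) - mbar) * (κ * (m i - m (i - 1)) * ω i) := by
      apply Fintype.sum_equiv (Equiv.addRight (1 : ZMod N))
      intro i
      simp
    have h2 : ∀ i : ZMod N, (m i - mbar) *
        (κ * (m (i + 1) - m i) * ω (i + 1) - κ * (m i - m (i - 1)) * ω i)
        = (m i - mbar) * (κ * (m (i + 1) - m i) * ω (i + 1))
          - (m i - mbar) * (κ * (m i - m (i - 1)) * ω i) := fun i => by ring
    rw [Finset.sum_congr rfl fun i _ => h2 i, Finset.sum_sub_distrib, h1,
      ← Finset.sum_sub_distrib, Finset.mul_sum]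
    apply Finset.sum_congr rfl
    intro i _
    ring
  refine ⟨key, ?_, ?_⟩
  · have : -κ ≤ 0 := by linarith
    exact mul_nonpos_of_nonpos_of_nonneg this hS
  · constructor
    · intro h
      have hS0 : ∑ i : ZMod N, (m i - m (i - 1)) ^ 2 * ω i = 0 := by
        have hne : -κ ≠ 0 := by linarith
        exact (mul_eq_zero.mp h).resolve_left hne
      have hzero : ∀ i : ZMod N, (m i - m (i - 1)) ^ 2 * ω i = 0 := by
        intro i
        have := (Finset.sum_eq_zero_iff_of_nonneg (fun i _ => hterm i)).mp hS0
        exact this i (Finset.mem_univ i)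
      have hstep : ∀ i : ZMod N, m i = m (i - 1) := by
        intro i
        have := hzero i
        have hω' := (hω i).ne'
        have : (m i - m (i - 1)) ^ 2 = 0 := by
          rcases mul_eq_zero.mp this with h | h
          · exact h
          · exact absurd h hω'
        have := pow_eq_zero_iff (n := 2) (by norm_num) |>.mp this
        linarith
      have hconst : ∀ (i : ZMod N) (n : ℕ), m (i - (n : ZMod N)) = m i := by
        intro i n
        induction n with
        | zero => simp
        | succ k ih =>
          push_cast
          rw [show i - ((k : ZMod N) + 1) = (i - (k : ZMod N)) - 1 by ring,
            ← hstep (i - (k : ZMod N)), ih]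
      intro i j
      have : j = i - (((i - j).val : ℕ) : ZMod N) := by
        rw [ZMod.natCast_val, ZMod.cast_id]
        ring
      rw [this, hconst]
    · intro h
      have : ∀ i : ZMod N, (m i - m (i - 1)) ^ 2 * ω i = 0 := by
        intro i
        rw [h i (i - 1)]
        ring
      rw [Finset.sum_congr rfl fun i _ => this i]
      simp
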